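/- (Probability form of Theorem 3(ii)-(iii).) Let ρ > 0 and Δ ≥ 2√2·ρ, let z_1, …, z_N ∈ ℂ have pairwise distances |z_i − z_j| ≥ Δ for i ≠ j, let w ∈ ℂ be fixed, and let β be chosen uniformly at random in [0, 2π]. Then the probability that the line {w + t·e^{iβ} : t ∈ ℝ} intersects at least two of the closed discs D(z_i, √2·ρ), i = 1, …, N, is at most √2·N·(N − 1)·ρ/Δ. In particular, if √2·N·(N−1)·ρ/Δ ≤ ε then with probability at least 1 − ε the random line intersects at most one of the N discs. -/

import Mathlib

/-!
The line through `w` in direction `e^{iβ}` meets `D(z, r)` iff the distance from `z` to it,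
`|Im (e^{-iβ} (z - w))|`, is at most `r`. If it meets both `D(z_i, r)` and `D(z_j, r)`,
subtracting gives `|z_j - z_i| · |sin (β - arg (z_j - z_i))| ≤ 2r`, so `|sin (β - θ_ij)| ≤ 2r/Δ`.
By Jordan's inequality `|sin x| ≥ 2|x|/π` this confines `β`, over one period, to two intervals
of total length `2π · 2r/Δ`; summing over the `N(N-1)/2` unordered pairs bounds the measure of
the bad angles.
-/

open MeasureTheory Real

lemma abs_le_of_abs_sin_le {y s : ℝ} (hy : |y| ≤ π / 2) (h : |Real.sin y| ≤ s) :
    |y| ≤ π / 2 * s := by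
  calc |y| = π / 2 * (2 / π * |y|) := by field_simp
    _ ≤ π / 2 * s := by gcongr; exact (mul_abs_le_abs_sin hy).trans h

lemma mem_Icc_union_Icc_of_abs_sin_sub_le {s θ x : ℝ}
    (hx : x ∈ Set.Ioc (θ - π / 2) (θ - π / 2 + 2 * π)) (h : |Real.sin (x - θ)| ≤ s) :
    x ∈ Set.Icc (θ - π / 2 * s) (θ + π / 2 * s) ∪
      Set.Icc (θ + π - π / 2 * s) (θ + π + π / 2 * s) := by
  obtain ⟨hx₁, hx₂⟩ := hx
  rcases le_or_gt x (θ + π / 2) with hle | hgt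
  · have := abs_le_of_abs_sin_le (abs_le.2 ⟨by linarith, by linarith⟩) h
    rw [abs_le] at this
    exact Or.inl ⟨by linarith, by linarith⟩
  · have := abs_le_of_abs_sin_le (y := x - θ - π) (s := s)
      (abs_le.2 ⟨by linarith, by linarith⟩) (by rwa [Real.sin_sub_pi, abs_neg])
    rw [abs_le] at this
    exact Or.inr ⟨by linarith, by linarith⟩

lemma volume_inter_Ioc_eq_of_periodic {S : Set ℝ} {T : ℝ} (hS : MeasurableSet S)
    (hper : Function.Periodic (· ∈ S) T) (hT : 0 < T) (a b : ℝ) :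
    volume (S ∩ Set.Ioc a (a + T)) = volume (S ∩ Set.Ioc b (b + T)) := by
  refine (isAddFundamentalDomain_Ioc hT a).measure_set_eq (isAddFundamentalDomain_Ioc hT b) hS ?_
  rintro ⟨_, k, rfl⟩
  ext x
  show k • T + x ∈ S ↔ x ∈ S
  rw [zsmul_eq_mul, add_comm]
  exact iff_of_eq (hper.int_mul k x)

lemma volume_abs_sin_sub_le_inter_Icc_le {s : ℝ} (hs : 0 ≤ s) (θ a : ℝ) :
    volume ({x | |Real.sin (x - θ)| ≤ s} ∩ Set.Icc a (a + 2 * π)) ≤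
      ENNReal.ofReal (2 * π * s) := by
  set S := {x : ℝ | |Real.sin (x - θ)| ≤ s}
  have hS : MeasurableSet S := measurableSet_le (by fun_prop) measurable_const
  have hper : Function.Periodic (· ∈ S) (2 * π) := fun x => by
    simp [S, add_sub_right_comm]
  have hc : 0 ≤ π / 2 * s := by positivity
  calc volume (S ∩ Set.Icc a (a + 2 * π)) = volume (S ∩ Set.Ioc a (a + 2 * π)) :=
        measure_congr ((ae_eq_refl S).inter Ioc_ae_eq_Icc).symm
    -- on this window `S` is exactly two intervals, around `θ` and `θ + π`
    _ = volume (S ∩ Set.Ioc (θ - π / 2) (θ - π / 2 + 2 * π)) :=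
        volume_inter_Ioc_eq_of_periodic hS hper two_pi_pos _ _
    _ ≤ volume (Set.Icc (θ - π / 2 * s) (θ + π / 2 * s) ∪
          Set.Icc (θ + π - π / 2 * s) (θ + π + π / 2 * s)) :=
        measure_mono fun x hx => mem_Icc_union_Icc_of_abs_sin_sub_le hx.2 hx.1
    _ ≤ volume (Set.Icc (θ - π / 2 * s) (θ + π / 2 * s)) +
          volume (Set.Icc (θ + π - π / 2 * s) (θ + π + π / 2 * s)) := measure_union_le _ _
    _ = ENNReal.ofReal (2 * π * s) := by
        rw [Real.volume_Icc, Real.volume_Icc, ← ENNReal.ofReal_add (by linarith) (by linarith)]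
        ring_nf

section

open Complex

lemma Complex.im_exp_neg_mul_I_mul (β : ℝ) (z : ℂ) :
    (exp (-β * I) * z).im = ‖z‖ * Real.sin (arg z - β) := by
  conv_lhs => rw [← norm_mul_exp_arg_mul_I z]
  rw [mul_left_comm, ← exp_add, show -β * I + arg z * I = ((arg z - β : ℝ) : ℂ) * I by
    push_cast; ring, im_ofReal_mul, exp_ofReal_mul_I_im]

lemma exists_ofReal_mem_closedBall_iff (ζ : ℂ) (r : ℝ) :
    (∃ t : ℝ, (t : ℂ) ∈ Metric.closedBall ζ r) ↔ |ζ.im| ≤ r := by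
  constructor
  · rintro ⟨t, ht⟩
    calc |ζ.im| = |((t : ℂ) - ζ).im| := by simp
      _ ≤ ‖(t : ℂ) - ζ‖ := Complex.abs_im_le_norm _
      _ ≤ r := by rwa [← dist_eq_norm]
  · intro h
    refine ⟨ζ.re, ?_⟩
    rw [Metric.mem_closedBall, Complex.dist_of_re_eq (by simp)]
    simpa [Real.dist_eq] using h

lemma dist_add_ofReal_mul_exp (w z : ℂ) (t β : ℝ) :
    dist (w + t * exp (β * I)) z = dist (t : ℂ) (exp (-β * I) * (z - w)) := by
  have hinv : exp (-β * I) * exp (β * I) = 1 := by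
    rw [← Complex.exp_add, neg_mul, neg_add_cancel, Complex.exp_zero]
  rw [dist_eq_norm, dist_eq_norm, ← one_mul ‖w + t * exp (β * I) - z‖,
    ← show ‖exp (-β * I)‖ = 1 by simp [norm_exp], ← norm_mul]
  congr 1
  linear_combination (t : ℂ) * hinv

lemma exists_add_ofReal_mul_exp_mem_closedBall_iff (w z : ℂ) (β r : ℝ) :
    (∃ t : ℝ, w + t * exp (β * I) ∈ Metric.closedBall z r) ↔
      |(exp (-β * I) * (z - w)).im| ≤ r := by
  simp only [Metric.mem_closedBall, dist_add_ofReal_mul_exp]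
  exact exists_ofReal_mem_closedBall_iff _ _

lemma norm_sub_mul_abs_sin_sub_arg_le {w z z' : ℂ} {β r : ℝ}
    (hz : ∃ t : ℝ, w + t * exp (β * I) ∈ Metric.closedBall z r)
    (hz' : ∃ t : ℝ, w + t * exp (β * I) ∈ Metric.closedBall z' r) :
    ‖z' - z‖ * |Real.sin (β - arg (z' - z))| ≤ 2 * r := by
  rw [exists_add_ofReal_mul_exp_mem_closedBall_iff] at hz hz'
  have hsub : (exp (-β * I) * (z' - z)).im =
      (exp (-β * I) * (z' - w)).im - (exp (-β * I) * (z - w)).im := by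
    rw [← sub_im, ← mul_sub, sub_sub_sub_cancel_right]
  calc ‖z' - z‖ * |Real.sin (β - arg (z' - z))| = |(exp (-β * I) * (z' - z)).im| := by
        rw [im_exp_neg_mul_I_mul, abs_mul, abs_norm, ← abs_neg, ← Real.sin_neg, neg_sub]
    _ ≤ |(exp (-β * I) * (z' - w)).im| + |(exp (-β * I) * (z - w)).im| := by
        rw [hsub]; exact abs_sub _ _
    _ ≤ 2 * r := by linarith

lemma volume_setOf_line_meets_two_closedBalls_le {ι : Type*} [Fintype ι] [LinearOrder ι]
    (z : ι → ℂ) {Δ r : ℝ} (hΔ : 0 < Δ) (hr : 0 ≤ r) (hz : ∀ i j, i ≠ j → Δ ≤ ‖z i - z j‖)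
    (w : ℂ) :
    volume {β : ℝ | β ∈ Set.Icc 0 (2 * π) ∧ ∃ i j : ι, i ≠ j ∧
        (∃ t : ℝ, w + (t : ℂ) * exp (β * I) ∈ Metric.closedBall (z i) r) ∧
        (∃ t : ℝ, w + (t : ℂ) * exp (β * I) ∈ Metric.closedBall (z j) r)}
      ≤ ENNReal.ofReal (2 * π * ((Fintype.card ι).choose 2 * (2 * r / Δ))) := by
  set σ := 2 * r / Δ
  -- the order on `ι` picks one representative `(i, j)`, `i < j`, of each unordered pair
  set P : Finset (ι × ι) := {p | p.1 < p.2}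
  have hband {β : ℝ} {i j : ι} (hij : i ≠ j)
      (hi : ∃ t : ℝ, w + (t : ℂ) * exp (β * I) ∈ Metric.closedBall (z i) r)
      (hj : ∃ t : ℝ, w + (t : ℂ) * exp (β * I) ∈ Metric.closedBall (z j) r) :
      |Real.sin (β - arg (z j - z i))| ≤ σ := by
    rw [le_div_iff₀ hΔ]
    calc |Real.sin (β - arg (z j - z i))| * Δ
        ≤ ‖z j - z i‖ * |Real.sin (β - arg (z j - z i))| := by
          rw [mul_comm]; exact mul_le_mul_of_nonneg_right (hz j i hij.symm) (abs_nonneg _)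
      _ ≤ 2 * r := norm_sub_mul_abs_sin_sub_arg_le hi hj
  calc _ ≤ volume (⋃ p ∈ P,
        {x | |Real.sin (x - arg (z p.2 - z p.1))| ≤ σ} ∩ Set.Icc 0 (0 + 2 * π)) := by
        refine measure_mono ?_
        rintro β ⟨hβ, i, j, hij, hi, hj⟩
        rw [zero_add]
        simp only [Set.mem_iUnion, exists_prop]
        rcases hij.lt_or_gt with h | h
        · exact ⟨(i, j), by simpa [P] using h, hband hij hi hj, hβ⟩
        · exact ⟨(j, i), by simpa [P] using h, hband hij.symm hj hi, hβ⟩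
    _ ≤ ∑ p ∈ P,
          volume ({x | |Real.sin (x - arg (z p.2 - z p.1))| ≤ σ} ∩ Set.Icc 0 (0 + 2 * π)) :=
        measure_biUnion_finset_le _ _
    _ ≤ ∑ _p ∈ P, ENNReal.ofReal (2 * π * σ) :=
        Finset.sum_le_sum fun _ _ => volume_abs_sin_sub_le_inter_Icc_le (by positivity) _ _
    _ = ENNReal.ofReal (2 * π * (P.card * σ)) := by
        rw [Finset.sum_const, nsmul_eq_mul, ← ENNReal.ofReal_natCast,
          ← ENNReal.ofReal_mul (by positivity)]
        ring_nf
    _ = _ := by rw [Fintype.card_product_filter_lt]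

end

lemma one_sub_le_measureReal_sep_not_div {α : Type*} [MeasurableSpace α] {μ : Measure α}
    {I : Set α} {p : α → Prop} {L ε : ℝ} (hI : μ.real I = L) (hL : 0 < L)
    (h : μ.real {x | x ∈ I ∧ p x} / L ≤ ε) : 1 - ε ≤ μ.real {x | x ∈ I ∧ ¬ p x} / L := by
  have hfin : μ I ≠ ⊤ := fun htop => by
    simp only [Measure.real, htop, ENNReal.toReal_top] at hI
    linarith
  have hdiff : {x | x ∈ I ∧ ¬ p x} = I \ {x | x ∈ I ∧ p x} := by ext; simp
  rw [hdiff, le_div_iff₀ hL]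
  rw [div_le_iff₀ hL] at h
  have := le_measureReal_sdiff (μ := μ) (s₁ := I) (s₂ := {x | x ∈ I ∧ p x})
    (ne_top_of_le_ne_top hfin (measure_mono fun _ hx => hx.1))
  linarith

/-- probability form of Theorem 3(ii)-(iii): Let `ρ > 0`,
`Δ ≥ 2√2·ρ`, let `z_1, …, z_N ∈ ℂ` have pairwise distances `≥ Δ`, let `w ∈ ℂ` be fixed,
and let `β` be uniform in `[0, 2π]`. Then the probability that the line
`{w + t·e^{iβ} : t ∈ ℝ}` meets at least two of the closed discs `D(z_i, √2·ρ)` is at most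
`√2·N·(N − 1)·ρ/Δ`; in particular, if `√2·N·(N−1)·ρ/Δ ≤ ε` then with probability at
least `1 − ε` the random line meets at most one of the `N` discs. -/
theorem prob_angles_hitting_two_discs (ρ Δ : ℝ) (hρ : 0 < ρ)
    (hΔ : 2 * Real.sqrt 2 * ρ ≤ Δ)
    (N : ℕ) (zs : Fin N → ℂ) (hzs : ∀ i j, i ≠ j → Δ ≤ ‖zs i - zs j‖)
    (w : ℂ) :
    (volume {β : ℝ | β ∈ Set.Icc 0 (2 * π) ∧
        ∃ i j : Fin N, i ≠ j ∧
          (∃ t : ℝ, w + (t : ℂ) * Complex.exp (β * Complex.I) ∈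
            Metric.closedBall (zs i) (Real.sqrt 2 * ρ)) ∧
          (∃ t : ℝ, w + (t : ℂ) * Complex.exp (β * Complex.I) ∈
            Metric.closedBall (zs j) (Real.sqrt 2 * ρ))}).toReal / (2 * π)
      ≤ Real.sqrt 2 * N * ((N : ℝ) - 1) * ρ / Δ ∧
    ∀ ε : ℝ, Real.sqrt 2 * N * ((N : ℝ) - 1) * ρ / Δ ≤ ε →
      1 - ε ≤
        (volume {β : ℝ | β ∈ Set.Icc 0 (2 * π) ∧
          ¬ ∃ i j : Fin N, i ≠ j ∧
            (∃ t : ℝ, w + (t : ℂ) * Complex.exp (β * Complex.I) ∈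
              Metric.closedBall (zs i) (Real.sqrt 2 * ρ)) ∧
            (∃ t : ℝ, w + (t : ℂ) * Complex.exp (β * Complex.I) ∈
              Metric.closedBall (zs j) (Real.sqrt 2 * ρ))}).toReal / (2 * π) := by
  have hΔ0 : 0 < Δ := lt_of_lt_of_le (by positivity) hΔ
  have hbad :=
    volume_setOf_line_meets_two_closedBalls_le zs hΔ0 (r := √2 * ρ) (by positivity) hzs w
  have hcount : ((Fintype.card (Fin N)).choose 2 : ℝ) * (2 * (√2 * ρ) / Δ) =
      √2 * N * ((N : ℝ) - 1) * ρ / Δ := by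
    rw [Fintype.card_fin, Nat.cast_choose_two]; ring
  have hprob := (div_le_iff₀ (a := √2 * N * ((N : ℝ) - 1) * ρ / Δ) two_pi_pos).2 <|
    (ENNReal.toReal_le_of_le_ofReal (by positivity) hbad).trans_eq (by rw [hcount, mul_comm])
  exact ⟨hprob, fun ε hε =>
    one_sub_le_measureReal_sep_not_div (by simp [two_pi_pos.le]) two_pi_pos (hprob.trans hε)⟩
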